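/- For integers n ≥ m ≥ 1, the mobile general position number of the Hamming graph K_n □ K_m equals n if m ∈ {1,2}, and equals n + m − 3 if m ≥ 3. -/
import Mathlib


open SimpleGraph

/-- `S` is a general position set of `G`: for all `u, v ∈ S`, every shortest `u,v`-path
contains no vertex of `S` other than `u` and `v`. -/
def IsGPSet {V : Type*} (G : SimpleGraph V) (S : Set V) : Prop :=
  ∀ u ∈ S, ∀ v ∈ S, ∀ p : G.Walk u v, p.IsPath → p.length = G.dist u v →
    ∀ w ∈ p.support, w ∈ S → w = u ∨ w = v

/-- A legal move from the configuration `S` to the configuration `T`: a robot at `u ∈ S`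
moves to an adjacent unoccupied vertex `v ∉ S` so that the resulting configuration
`(S \ {u}) ∪ {v}` is again a general position set. -/
def LegalMove {V : Type*} (G : SimpleGraph V) (S T : Set V) : Prop :=
  IsGPSet G S ∧ ∃ u ∈ S, ∃ v, v ∉ S ∧ G.Adj u v ∧
    T = insert v (S \ {u}) ∧ IsGPSet G T

/-- `S` is a mobile general position set: there is a finite sequence of configurations
`S = S_0, S_1, …, S_k`, each obtained from the previous one by a legal move, whose union
is the whole vertex set. -/
def IsMobileGPSet {V : Type*} (G : SimpleGraph V) (S : Set V) : Prop :=
  IsGPSet G S ∧ ∃ (k : ℕ) (f : ℕ → Set V), f 0 = S ∧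
    (∀ i < k, LegalMove G (f i) (f (i + 1))) ∧
    (⋃ i ∈ Set.Iic k, f i) = Set.univ

/-- The mobile general position number of `G`: the maximum cardinality of a mobile
general position set. -/
noncomputable def mob {V : Type*} (G : SimpleGraph V) : ℕ :=
  sSup {n | ∃ S : Set V, IsMobileGPSet G S ∧ S.ncard = n}


section hamming
open Classical

-- ======== basic graph facts ========

variable {n m : ℕ}

abbrev HG (n m : ℕ) : SimpleGraph (Fin n × Fin m) :=
  (⊤ : SimpleGraph (Fin n)) □ (⊤ : SimpleGraph (Fin m))

lemma hg_adj {u v : Fin n × Fin m} :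
    (HG n m).Adj u v ↔ (u.1 = v.1 ∧ u.2 ≠ v.2) ∨ (u.2 = v.2 ∧ u.1 ≠ v.1) := by
  constructor
  · rintro (⟨h1, h2⟩ | ⟨h1, h2⟩)
    · exact Or.inr ⟨h2, h1.ne⟩
    · exact Or.inl ⟨h2, h1.ne⟩
  · rintro (⟨h1, h2⟩ | ⟨h1, h2⟩)
    · exact Or.inr ⟨h2, h1⟩
    · exact Or.inl ⟨h2, h1⟩

/-- No-L condition. -/
def NoL {α β : Type*} (S : Set (α × β)) : Prop :=
  ∀ p ∈ S, ∀ q ∈ S, ∀ r ∈ S, p.2 = q.2 → q.1 = r.1 → p.1 = q.1 ∨ q.2 = r.2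

lemma hg_dist_eq_two {u v : Fin n × Fin m} (h1 : u.1 ≠ v.1) (h2 : u.2 ≠ v.2) :
    (HG n m).dist u v = 2 := by
  have hadj : ¬ (HG n m).Adj u v := by
    rw [hg_adj]; push_neg; exact ⟨fun h => absurd h h1, fun h => absurd h h2⟩
  have hne : u ≠ v := fun h => h1 (by rw [h])
  have hmid1 : (HG n m).Adj u (u.1, v.2) := hg_adj.mpr (Or.inl ⟨rfl, h2⟩)
  have hmid2 : (HG n m).Adj (u.1, v.2) v := hg_adj.mpr (Or.inr ⟨rfl, h1⟩)
  have hle : (HG n m).dist u v ≤ 2 := by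
    have := SimpleGraph.dist_le (Walk.cons hmid1 (Walk.cons hmid2 Walk.nil))
    simpa using this
  have h0 : (HG n m).dist u v ≠ 0 := by
    intro h0
    rcases SimpleGraph.dist_eq_zero_iff_eq_or_not_reachable.mp h0 with h | h
    · exact hne h
    · exact h ⟨Walk.cons hmid1 (Walk.cons hmid2 Walk.nil)⟩
  have h1' : (HG n m).dist u v ≠ 1 := fun h => hadj (SimpleGraph.dist_eq_one_iff_adj.mp h)
  omega


lemma isGPSet_iff_noL (S : Set (Fin n × Fin m)) : IsGPSet (HG n m) S ↔ NoL S := by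
  constructor
  · intro hgp p hp q hq r hr hpq hqr
    by_contra hcon
    push_neg at hcon
    obtain ⟨h1, h2⟩ := hcon
    have hadj1 : (HG n m).Adj p q := hg_adj.mpr (Or.inr ⟨hpq, h1⟩)
    have hadj2 : (HG n m).Adj q r := hg_adj.mpr (Or.inl ⟨hqr, h2⟩)
    have hpr1 : p.1 ≠ r.1 := hqr ▸ h1
    have hpr2 : p.2 ≠ r.2 := hpq ▸ h2
    set wlk : (HG n m).Walk p r := Walk.cons hadj1 (Walk.cons hadj2 Walk.nil) with hwlk
    have hpq' : p ≠ q := fun h => h1 (congrArg Prod.fst h)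
    have hqr' : q ≠ r := fun h => h2 (congrArg Prod.snd h)
    have hpr' : p ≠ r := fun h => hpr1 (congrArg Prod.fst h)
    have hpath : wlk.IsPath := by
      simp [hwlk, Walk.isPath_def, hpq', hqr', hpr']
    have hlen : wlk.length = (HG n m).dist p r := by
      rw [hg_dist_eq_two hpr1 hpr2]; simp [hwlk]
    have := hgp p hp r hr wlk hpath hlen q (by simp [hwlk]) hq
    rcases this with h | h
    · exact h1 (congrArg Prod.fst h.symm)
    · exact h2 (congrArg Prod.snd h)
  · intro hnol u hu v hv p hpath hlen w hw hwS
    by_cases huv : u = v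
    · subst huv
      rw [SimpleGraph.dist_self] at hlen
      cases p with
      | nil => simp at hw; exact Or.inl hw
      | cons h q => simp at hlen
    · by_cases hadj : (HG n m).Adj u v
      · rw [SimpleGraph.dist_eq_one_iff_adj.mpr hadj] at hlen
        cases p with
        | nil => exact absurd rfl huv
        | cons h q =>
          simp only [Walk.length_cons, Nat.add_left_inj] at hlen
          cases q with
          | nil =>
            simp only [Walk.support_cons, Walk.support_nil, List.mem_cons,
              List.mem_singleton] at hw
            rcases hw with h1 | h1 | h1
            · exact Or.inl h1
            · exact Or.inr h1
            · exact absurd h1 (by simp)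
          | cons h' q' => simp at hlen
      · have hne : u.1 ≠ v.1 ∧ u.2 ≠ v.2 := by
          rw [hg_adj] at hadj
          push_neg at hadj
          constructor
          · intro h; exact huv (Prod.ext h (hadj.1 h))
          · intro h; exact huv (Prod.ext (hadj.2 h) h)
        rw [hg_dist_eq_two hne.1 hne.2] at hlen
        cases p with
        | nil => simp at hlen
        | cons h q =>
          cases q with
          | nil => simp at hlen
          | cons h' q' =>
            cases q' with
            | nil =>
              rename_i b
              simp only [Walk.support_cons, Walk.support_nil, List.mem_cons,
                List.mem_singleton] at hw
              rcases hw with h1 | h1 | h1 | h1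
              · exact Or.inl h1
              · -- w = b, the midpoint
                subst h1
                exfalso
                rw [hg_adj] at h h'
                rcases h with ⟨e1, e2⟩ | ⟨e1, e2⟩ <;> rcases h' with ⟨f1, f2⟩ | ⟨f1, f2⟩
                · exact hne.1 (e1.trans f1)
                · -- u.1 = w.1, w.2 = v.2
                  rcases hnol v hv w hwS u hu f1.symm e1.symm with hc | hc
                  · exact hne.1 (e1.trans hc.symm)
                  · exact hne.2 (hc.symm.trans f1)
                · -- u.2 = w.2, w.1 = v.1
                  rcases hnol u hu w hwS v hv e1 f1 with hc | hc
                  · exact hne.1 (hc.trans f1)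
                  · exact hne.2 (e1.trans hc)
                · exact hne.2 (e1.trans f1)
              · exact Or.inr h1
              · exact absurd h1 (by simp)
            | cons h'' q'' => simp at hlen


lemma noL_master {α β : Type*} (a : α) (c1 c2 : β) (F : Set β) (R1 R2 : Set α)
    (h1F : R1.Nonempty → c1 ∉ F) (h2F : R2.Nonempty → c2 ∉ F)
    (hR : ∀ x, x ∈ R1 → x ∈ R2 → False)
    (haR1 : a ∈ R1 → F = ∅) (haR2 : a ∈ R2 → F = ∅) :
    NoL (({a} ×ˢ F) ∪ (R1 ×ˢ {c1}) ∪ (R2 ×ˢ {c2})) := by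
  intro p hp q hq r hr h1 h2
  simp only [Set.mem_union, Set.mem_prod, Set.mem_singleton_iff] at hp hq hr
  rcases hq with (⟨hq1, hq2⟩ | ⟨hq1, hq2⟩) | ⟨hq1, hq2⟩
  · left
    rcases hp with (⟨hp1, _⟩ | ⟨hp1, hp2⟩) | ⟨hp1, hp2⟩
    · rw [hp1, hq1]
    · exfalso; apply h1F ⟨p.1, hp1⟩; rw [← hp2, h1]; exact hq2
    · exfalso; apply h2F ⟨p.1, hp1⟩; rw [← hp2, h1]; exact hq2
  · rcases hr with (⟨hr1, hr2⟩ | ⟨hr1, hr2⟩) | ⟨hr1, hr2⟩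
    · exfalso
      have ha : a ∈ R1 := by rw [← hr1, ← h2]; exact hq1
      rw [haR1 ha] at hr2; exact hr2
    · right; rw [hq2, hr2]
    · exfalso; apply hR r.1 _ hr1; rw [← h2]; exact hq1
  · rcases hr with (⟨hr1, hr2⟩ | ⟨hr1, hr2⟩) | ⟨hr1, hr2⟩
    · exfalso
      have ha : a ∈ R2 := by rw [← hr1, ← h2]; exact hq1
      rw [haR2 ha] at hr2; exact hr2
    · exfalso; apply hR r.1 hr1; rw [← h2]; exact hq1
    · right; rw [hq2, hr2]

section trip
variable {V : Type*} {G : SimpleGraph V} {S T U A B : Set V}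

def Trip (G : SimpleGraph V) (S T A : Set V) : Prop :=
  ∃ (k : ℕ) (f : ℕ → Set V), f 0 = S ∧ f k = T ∧
    (∀ i < k, LegalMove G (f i) (f (i + 1))) ∧ A ⊆ ⋃ i ∈ Set.Iic k, f i

lemma Trip.refl (G : SimpleGraph V) (S : Set V) : Trip G S S S := by
  refine ⟨0, fun _ => S, rfl, rfl, by omega, ?_⟩
  intro x hx; simp only [Set.mem_iUnion]; exact ⟨0, by simp, hx⟩

lemma Trip.single (h : LegalMove G S T) : Trip G S T (S ∪ T) := by
  refine ⟨1, fun i => if i = 0 then S else T, by simp, by simp, ?_, ?_⟩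
  · intro i hi
    have : i = 0 := by omega
    subst this; simpa using h
  · rintro x (hx | hx) <;> simp only [Set.mem_iUnion]
    · exact ⟨0, by simp, by simpa using hx⟩
    · exact ⟨1, by simp, by simpa using hx⟩

lemma Trip.trans (h1 : Trip G S T A) (h2 : Trip G T U B) : Trip G S U (A ∪ B) := by
  obtain ⟨k1, f1, hf10, hf1k, hm1, hu1⟩ := h1
  obtain ⟨k2, f2, hf20, hf2k, hm2, hu2⟩ := h2
  refine ⟨k1 + k2, fun i => if i < k1 then f1 i else f2 (i - k1), ?_, ?_, ?_, ?_⟩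
  · by_cases h : 0 < k1
    · simp [h, hf10]
    · have : k1 = 0 := by omega
      simp [this, hf20, ← hf1k, this, hf10]
  · have : ¬ (k1 + k2 < k1) := by omega
    simp [this, hf2k]
  · intro i hi
    by_cases h : i + 1 < k1
    · have h' : i < k1 := by omega
      simpa [h, h'] using hm1 i h'
    · by_cases h' : i < k1
      · have he : i + 1 = k1 := by omega
        have : f2 (i + 1 - k1) = f1 (i + 1) := by
          rw [he]; simp; rw [hf1k, ← hf20]
        simp only [h, h', if_true, if_false]
        rw [this]
        exact hm1 i h'
      · have e1 : i - k1 < k2 := by omega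
        have e2 : ¬ (i + 1 < k1) := by omega
        have e3 : i + 1 - k1 = (i - k1) + 1 := by omega
        simp only [h', e2, if_false, e3]
        exact hm2 _ e1
  · rintro x (hx | hx)
    · obtain ⟨i, hik, hxi⟩ := by simpa only [Set.mem_iUnion] using hu1 hx
      simp only [Set.mem_iUnion]
      by_cases h : i < k1
      · exact ⟨i, by simp; omega, by simp [h, hxi]⟩
      · have hik1 : i = k1 := by simp at hik; omega
        refine ⟨k1, by simp, ?_⟩
        have hnl : ¬ (k1 < k1) := lt_irrefl k1
        simp only [hnl, if_false, Nat.sub_self]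
        rw [hf20, ← hf1k, ← hik1]; exact hxi
    · obtain ⟨j, hjk, hxj⟩ := by simpa only [Set.mem_iUnion] using hu2 hx
      simp only [Set.mem_iUnion]
      simp only [Set.mem_Iic] at hjk
      refine ⟨k1 + j, by simp; omega, ?_⟩
      have : ¬ (k1 + j < k1) := by omega
      simp [this, hxj]

lemma LegalMove.symm (h : LegalMove G S T) : LegalMove G T S := by
  obtain ⟨hgpS, u, hu, v, hv, hadj, hT, hgpT⟩ := h
  have huv : u ≠ v := fun e => hv (e ▸ hu)
  refine ⟨hgpT, v, by rw [hT]; exact Set.mem_insert _ _, u, ?_, hadj.symm, ?_, hgpS⟩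
  · rw [hT]
    intro hmem
    rcases Set.mem_insert_iff.mp hmem with h | hmem'
    · exact huv h
    · exact hmem'.2 rfl
  · subst hT
    ext x
    simp only [Set.mem_insert_iff, Set.mem_diff, Set.mem_singleton_iff]
    constructor
    · intro hxS
      by_cases hx : x = u
      · exact Or.inl hx
      · exact Or.inr ⟨Or.inr ⟨hxS, hx⟩, fun e => hv (e ▸ hxS)⟩
    · rintro (rfl | ⟨(rfl | ⟨hxS, _⟩), hxv⟩)
      · exact hu
      · exact absurd rfl hxv
      · exact hxS

lemma Trip.symm (h : Trip G S T A) : Trip G T S A := by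
  obtain ⟨k, f, hf0, hfk, hm, hu⟩ := h
  refine ⟨k, fun i => f (k - i), by simp [hfk], by simp [hf0], ?_, ?_⟩
  · intro i hi
    have h1 : k - i - 1 < k := by omega
    have h2 : (k - i - 1) + 1 = k - i := by omega
    have h3 : k - (i + 1) = k - i - 1 := by omega
    have hml := (hm (k - i - 1) h1).symm
    rw [h2] at hml
    show LegalMove G (f (k - i)) (f (k - (i + 1)))
    rw [h3]
    exact hml
  · intro x hx
    obtain ⟨j, hjk, hxj⟩ := by simpa only [Set.mem_iUnion] using hu hx
    simp only [Set.mem_Iic] at hjk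
    simp only [Set.mem_iUnion]
    refine ⟨k - j, by simp, ?_⟩
    have hkj : k - (k - j) = j := by omega
    show x ∈ f (k - (k - j))
    rw [hkj]; exact hxj

lemma Trip.mono (h : Trip G S T A) (hBA : B ⊆ A) : Trip G S T B := by
  obtain ⟨k, f, hf0, hfk, hm, hu⟩ := h
  exact ⟨k, f, hf0, hfk, hm, hBA.trans hu⟩

lemma isMobile_of_trips [Fintype V] (hgp : IsGPSet G S)
    (h : ∀ x : V, ∃ T A, Trip G S T A ∧ x ∈ A) : IsMobileGPSet G S := by
  have hloop : ∀ x : V, ∃ A, Trip G S S A ∧ x ∈ A := by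
    intro x
    obtain ⟨T, A, ht, hx⟩ := h x
    exact ⟨A ∪ A, ht.trans ht.symm, Or.inl hx⟩
  have hlist : ∀ l : List V, ∃ A, Trip G S S A ∧ ∀ x ∈ l, x ∈ A := by
    intro l
    induction l with
    | nil => exact ⟨S, Trip.refl G S, by simp⟩
    | cons y ys ih =>
      obtain ⟨A, hA, hAy⟩ := hloop y
      obtain ⟨B, hB, hBys⟩ := ih
      refine ⟨A ∪ B, hA.trans hB, ?_⟩
      intro x hx
      rcases List.mem_cons.mp hx with rfl | hx
      · exact Or.inl hAy
      · exact Or.inr (hBys x hx)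
  obtain ⟨A, ⟨k, f, hf0, hfk, hm, hu⟩, hall⟩ := hlist (Finset.univ : Finset V).toList
  refine ⟨hgp, k, f, hf0, hm, ?_⟩
  apply Set.eq_univ_of_univ_subset
  intro x _
  exact hu (hall x (by simp [Finset.mem_toList]))
end trip


lemma noL_row {S : Set (Fin n × Fin m)} (hS : NoL S) {p q r : Fin n × Fin m}
    (hp : p ∈ S) (hq : q ∈ S) (hr : r ∈ S)
    (h1 : p.1 = q.1) (h2 : p.2 ≠ q.2) (h3 : r.2 = q.2) : r.1 = q.1 := by
  rcases hS r hr q hq p hp h3 h1.symm with h | h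
  · exact h
  · exact absurd h.symm h2

/-- multi-row predicate -/
def MR (S : Set (Fin n × Fin m)) (x : Fin n) : Prop :=
  ∃ p ∈ S, ∃ q ∈ S, p.1 = x ∧ q.1 = x ∧ p ≠ q

lemma mr_elim {S : Set (Fin n × Fin m)} {x : Fin n} (h : MR S x) {z : Fin n × Fin m}
    (hz : z ∈ S) (hzx : z.1 = x) : ∃ w ∈ S, w.1 = x ∧ w.2 ≠ z.2 := by
  obtain ⟨p, hp, q, hq, hpx, hqx, hpq⟩ := h
  by_cases hpz : p = z
  · refine ⟨q, hq, hqx, ?_⟩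
    intro h2
    exact hpq (hpz.trans (Prod.ext (hqx.trans hzx.symm) h2).symm)
  · refine ⟨p, hp, hpx, ?_⟩
    intro h2
    exact hpz (Prod.ext (hpx.trans hzx.symm) h2)

lemma fin_exists_ne_ne (h : 3 ≤ m) (a b : Fin m) : ∃ c : Fin m, c ≠ a ∧ c ≠ b := by
  have : (({a, b}ᶜ : Finset (Fin m))).Nonempty := by
    rw [← Finset.card_pos, Finset.card_compl]
    have : ({a, b} : Finset (Fin m)).card ≤ 2 := Finset.card_insert_le _ _ |>.trans (by simp)
    simp only [Fintype.card_fin]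
    omega
  obtain ⟨c, hc⟩ := this
  simp only [Finset.mem_compl, Finset.mem_insert, Finset.mem_singleton] at hc
  push_neg at hc
  exact ⟨c, hc⟩

lemma card_le_of_no_mr {S : Set (Fin n × Fin m)} (h : ∀ x, ¬ MR S x) : S.ncard ≤ n := by
  have hinj : Set.InjOn Prod.fst S := by
    intro p hp q hq he
    by_contra hne
    exact h p.1 ⟨p, hp, q, hq, rfl, he.symm, hne⟩
  calc S.ncard = (Prod.fst '' S).ncard := (Set.ncard_image_of_injOn hinj).symm
    _ ≤ (Set.univ : Set (Fin n)).ncard := Set.ncard_le_ncard (Set.subset_univ _)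
    _ = n := by rw [Set.ncard_univ]; simp

lemma card_le_of_no_mc {S : Set (Fin n × Fin m)} (h : ∀ p ∈ S, ∀ q ∈ S, p.2 = q.2 → p = q) :
    S.ncard ≤ m := by
  have hinj : Set.InjOn Prod.snd S := fun p hp q hq he => h p hp q hq he
  calc S.ncard = (Prod.snd '' S).ncard := (Set.ncard_image_of_injOn hinj).symm
    _ ≤ (Set.univ : Set (Fin m)).ncard := Set.ncard_le_ncard (Set.subset_univ _)
    _ = m := by rw [Set.ncard_univ]; simp

noncomputable def inj (S : Set (Fin n × Fin m)) : Fin n × Fin m → Fin n ⊕ Fin m :=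
  fun p => if MR S p.1 then Sum.inr p.2 else Sum.inl p.1

lemma inj_injOn {S : Set (Fin n × Fin m)} (hS : NoL S) : Set.InjOn (inj S) S := by
  intro p hp q hq he
  unfold inj at he
  by_cases h1 : MR S p.1 <;> by_cases h2 : MR S q.1 <;> simp [h1, h2] at he
  · -- both multi: p.2 = q.2
    by_cases hfst : p.1 = q.1
    · exact Prod.ext hfst he
    · exfalso
      obtain ⟨w, hw, hwx, hwne⟩ := mr_elim h1 hp rfl
      -- w in row p.1 with different column; q shares column with p
      have := noL_row hS hw hp hq hwx hwne he.symm
      exact hfst this.symm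
  · -- both single: p.1 = q.1
    by_contra hne
    exact h1 ⟨p, hp, q, hq, rfl, he.symm, fun h => hne (h ▸ rfl)⟩

theorem noL_structure (hm3 : 3 ≤ m) (hmn : m ≤ n) {S : Set (Fin n × Fin m)} (hS : NoL S) :
    S.ncard ≤ n + m - 2 ∧
      (S.ncard = n + m - 2 →
        ∃ (a : Fin n) (e : Fin m),
          S = ({a} ×ˢ ({e}ᶜ : Set (Fin m))) ∪ (({a}ᶜ : Set (Fin n)) ×ˢ {e})) := by
  have hn3 : 3 ≤ n := hm3.trans hmn
  by_cases hMR : ∃ x, MR S x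
  swap
  · push_neg at hMR
    have := card_le_of_no_mr hMR
    exact ⟨by omega, fun hc => absurd hc (by omega)⟩
  obtain ⟨a, ha⟩ := hMR
  by_cases hMC : ∃ u ∈ S, ∃ w ∈ S, u.2 = w.2 ∧ u ≠ w
  swap
  · push_neg at hMC
    have := card_le_of_no_mc (fun p hp q hq he => by
      by_contra hne; exact hne (hMC p hp q hq he))
    exact ⟨by omega, fun hc => absurd hc (by omega)⟩
  obtain ⟨u, hu, w, hw, huw2, huw⟩ := hMC
  have huw1 : u.1 ≠ w.1 := fun h => huw (Prod.ext h huw2)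
  set e := u.2 with he_def
  -- claim: any z in S whose column is e and whose row is multi gives contradiction
  have claim2 : ∀ z ∈ S, z.2 = e → ¬ MR S z.1 := by
    intro z hz hze hmz
    obtain ⟨z', hz', hz'x, hz'ne⟩ := mr_elim hmz hz rfl
    have h1 : u.1 = z.1 := noL_row hS hz' hz hu hz'x hz'ne (by rw [hze])
    have h2 : w.1 = z.1 := noL_row hS hz' hz hw hz'x hz'ne (by rw [← huw2, hze])
    exact huw1 (h1.trans h2.symm)
  have claim1 : Sum.inl a ∉ inj S '' S := by
    rintro ⟨z, hz, hfz⟩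
    unfold inj at hfz
    by_cases hmz : MR S z.1 <;> simp [hmz] at hfz
    exact hmz (hfz ▸ ha)
  have claim2' : Sum.inr e ∉ inj S '' S := by
    rintro ⟨z, hz, hfz⟩
    unfold inj at hfz
    by_cases hmz : MR S z.1 <;> simp [hmz] at hfz
    exact claim2 z hz hfz hmz
  have hane : (Sum.inl a : Fin n ⊕ Fin m) ≠ Sum.inr e := by simp
  have hsub : inj S '' S ⊆ Set.univ \ {Sum.inl a, Sum.inr e} := by
    intro x hx
    refine ⟨Set.mem_univ _, ?_⟩
    rintro (rfl | rfl)
    · exact claim1 hx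
    · exact claim2' hx
  have hDcard : (Set.univ \ {Sum.inl a, Sum.inr e} : Set (Fin n ⊕ Fin m)).ncard = n + m - 2 := by
    rw [Set.ncard_diff (Set.subset_univ _), Set.ncard_univ, Set.ncard_pair hane]
    simp [Nat.card_sum]
  have hcard : S.ncard = (inj S '' S).ncard := (Set.ncard_image_of_injOn (inj_injOn hS)).symm
  have hle : S.ncard ≤ n + m - 2 := by
    rw [hcard, ← hDcard]
    exact Set.ncard_le_ncard hsub
  refine ⟨hle, fun hc => ?_⟩
  -- equality case
  have himg : inj S '' S = Set.univ \ {Sum.inl a, Sum.inr e} := by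
    apply Set.eq_of_subset_of_ncard_le hsub
    rw [hDcard, ← hcard, hc]
  refine ⟨a, e, ?_⟩
  -- uniqueness of multi-row
  have hmr_uniq : ∀ x, MR S x → x = a := by
    intro x hx
    by_contra hxa
    have : Sum.inl x ∈ inj S '' S := by
      rw [himg]
      refine ⟨Set.mem_univ _, ?_⟩
      rintro (h | h)
      · exact hxa (by injection h)
      · injection h
    obtain ⟨z, hz, hfz⟩ := this
    unfold inj at hfz
    by_cases hmz : MR S z.1 <;> simp [hmz] at hfz
    exact hmz (hfz ▸ hx)
  -- every column y ≠ e has (a, y) ∈ S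
  have hrow : ∀ y : Fin m, y ≠ e → (a, y) ∈ S := by
    intro y hy
    have : Sum.inr y ∈ inj S '' S := by
      rw [himg]
      refine ⟨Set.mem_univ _, ?_⟩
      rintro (h | h)
      · injection h
      · exact hy (by injection h)
    obtain ⟨z, hz, hfz⟩ := this
    unfold inj at hfz
    by_cases hmz : MR S z.1 <;> simp [hmz] at hfz
    have hza : z.1 = a := hmr_uniq z.1 hmz
    have : z = (a, y) := Prod.ext hza hfz
    exact this ▸ hz
  -- (a, e) ∉ S
  have hae : (a, e) ∉ S := by
    intro hmem
    obtain ⟨y1, hy1e, _⟩ := fin_exists_ne_ne hm3 e e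
    have hy1 : (a, y1) ∈ S := hrow y1 hy1e
    have h1 : u.1 = a := noL_row hS hy1 hmem hu (by rfl) (by simpa using hy1e) (by rw [he_def])
    have h2 : w.1 = a := noL_row hS hy1 hmem hw (by rfl) (by simpa using hy1e) (by rw [← huw2, he_def])
    exact huw1 (h1.trans h2.symm)
  -- every row x ≠ a has (x, e) ∈ S and nothing else
  have hcol : ∀ x : Fin n, x ≠ a → (x, e) ∈ S := by
    intro x hx
    have : Sum.inl x ∈ inj S '' S := by
      rw [himg]
      refine ⟨Set.mem_univ _, ?_⟩
      rintro (h | h)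
      · exact hx (by injection h)
      · injection h
    obtain ⟨z, hz, hfz⟩ := this
    unfold inj at hfz
    by_cases hmz : MR S z.1 <;> simp [hmz] at hfz
    -- z ∈ S, z.1 = x, not multi-row
    by_cases hze : z.2 = e
    · have : z = (x, e) := Prod.ext hfz hze
      exact this ▸ hz
    · exfalso
      -- z.2 ≠ e, so (a, z.2) ∈ S; row a is multi with another column y' ∉ {e, z.2}
      obtain ⟨y', hy'1, hy'2⟩ := fin_exists_ne_ne hm3 e z.2
      have haz : (a, z.2) ∈ S := hrow z.2 hze
      have hay' : (a, y') ∈ S := hrow y' hy'1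
      have := noL_row hS hay' haz hz (by rfl) (by simpa using hy'2) (by rfl)
      exact hx (hfz ▸ this)
  ext z
  simp only [Set.mem_union, Set.mem_prod, Set.mem_singleton_iff, Set.mem_compl_iff]
  constructor
  · intro hz
    by_cases hza : z.1 = a
    · left
      refine ⟨hza, ?_⟩
      intro hze
      exact hae ((Prod.ext hza hze : z = (a, e)) ▸ hz)
    · right
      refine ⟨hza, ?_⟩
      by_contra hze
      have hxe : (z.1, e) ∈ S := hcol z.1 hza
      have hne : z ≠ (z.1, e) := fun h => hze (show z.2 = e by rw [h])
      have : MR S z.1 := ⟨z, hz, (z.1, e), hxe, rfl, rfl, hne⟩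
      exact hza (hmr_uniq z.1 this)
  · rintro (⟨h1, h2⟩ | ⟨h1, h2⟩)
    · have := hrow z.2 h2
      rwa [← h1, Prod.mk.eta] at this
    · have := hcol z.1 h1
      rwa [← h2, Prod.mk.eta] at this


-- ncard helpers
lemma row_eq_image (a : Fin n) (F : Set (Fin m)) :
    ({a} ×ˢ F : Set (Fin n × Fin m)) = (fun y => (a, y)) '' F := by
  ext z
  simp only [Set.mem_prod, Set.mem_singleton_iff, Set.mem_image]
  constructor
  · rintro ⟨h1, h2⟩; exact ⟨z.2, h2, by rw [← h1]⟩
  · rintro ⟨y, hy, rfl⟩; exact ⟨rfl, hy⟩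

lemma col_eq_image (R : Set (Fin n)) (c : Fin m) :
    (R ×ˢ {c} : Set (Fin n × Fin m)) = (fun x => (x, c)) '' R := by
  ext z
  simp only [Set.mem_prod, Set.mem_singleton_iff, Set.mem_image]
  constructor
  · rintro ⟨h1, h2⟩; exact ⟨z.1, h1, by rw [← h2]⟩
  · rintro ⟨x, hx, rfl⟩; exact ⟨hx, rfl⟩

lemma ncard_row (a : Fin n) (F : Set (Fin m)) : ({a} ×ˢ F : Set (Fin n × Fin m)).ncard = F.ncard := by
  rw [row_eq_image]
  exact Set.ncard_image_of_injective _ (fun x y h => by injection h)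

lemma ncard_col (R : Set (Fin n)) (c : Fin m) : (R ×ˢ {c} : Set (Fin n × Fin m)).ncard = R.ncard := by
  rw [col_eq_image]
  exact Set.ncard_image_of_injective _ (fun x y h => by injection h)

lemma ncard_compl_singleton (e : Fin m) : ({e}ᶜ : Set (Fin m)).ncard = m - 1 := by
  rw [Set.compl_eq_univ_diff, Set.ncard_diff (Set.subset_univ _), Set.ncard_univ]
  simp

lemma ncard_compl_pair {e g : Fin m} (h : e ≠ g) : ({e, g}ᶜ : Set (Fin m)).ncard = m - 2 := by
  rw [Set.compl_eq_univ_diff, Set.ncard_diff (Set.subset_univ _), Set.ncard_univ]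
  rw [Set.ncard_pair h]
  simp

-- m = 2 bound
lemma noL_card_le_m2 (hn : 2 ≤ n) {S : Set (Fin n × Fin 2)} (hS : NoL S) : S.ncard ≤ n := by
  by_cases hMR : ∃ x, MR S x
  · obtain ⟨x, p, hp, q, hq, hpx, hqx, hpq⟩ := hMR
    have hpq1 : p.1 = q.1 := hpx.trans hqx.symm
    have hpq2 : p.2 ≠ q.2 := fun h => hpq (Prod.ext hpq1 h)
    have hall : S ⊆ {p, q} := by
      intro z hz
      have h2 : z.2 = p.2 ∨ z.2 = q.2 := by
        by_contra hcon
        push_neg at hcon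
        have e1 : z.2.val ≠ p.2.val := fun h => hcon.1 (Fin.ext h)
        have e2 : z.2.val ≠ q.2.val := fun h => hcon.2 (Fin.ext h)
        have e3 : p.2.val ≠ q.2.val := fun h => hpq2 (Fin.ext h)
        have := z.2.isLt; have := p.2.isLt; have := q.2.isLt
        omega
      rcases h2 with h | h
      · left
        have := noL_row hS hq hp hz hpq1.symm (Ne.symm hpq2) h
        exact Prod.ext this h
      · right
        have := noL_row hS hp hq hz hpq1 hpq2 h
        exact Prod.ext this h
    calc S.ncard ≤ ({p, q} : Set (Fin n × Fin 2)).ncard := Set.ncard_le_ncard hall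
      _ ≤ 2 := by rw [Set.ncard_pair (fun h => hpq h)]
      _ ≤ n := hn
  · push_neg at hMR
    exact card_le_of_no_mr hMR

-- stuck lemma
lemma cross_stuck (hm3 : 3 ≤ m) (hmn : m ≤ n) {S T : Set (Fin n × Fin m)}
    (hST : LegalMove (HG n m) S T) (hcard : S.ncard = n + m - 2) : False := by
  have hn3 : 3 ≤ n := hm3.trans hmn
  obtain ⟨hgpS, u, hu, v, hv, hadj, hTdef, hgpT⟩ := hST
  have hvSu : v ∉ S \ {u} := fun h => hv h.1
  have hTcard : T.ncard = n + m - 2 := by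
    rw [hTdef, Set.ncard_insert_of_notMem hvSu, Set.ncard_diff_singleton_of_mem hu, hcard]
    omega
  obtain ⟨-, hchar⟩ := noL_structure hm3 hmn ((isGPSet_iff_noL S).mp hgpS)
  obtain ⟨a, e, hScross⟩ := hchar hcard
  obtain ⟨-, hcharT⟩ := noL_structure hm3 hmn ((isGPSet_iff_noL T).mp hgpT)
  obtain ⟨a', e', hTcross⟩ := hcharT hTcard
  have hsub : S \ {u} ⊆ S ∩ T := fun z hz => ⟨hz.1, by rw [hTdef]; exact Set.mem_insert_of_mem _ hz⟩
  have hlow : n + m - 3 ≤ (S ∩ T).ncard := by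
    have h1 : (S \ {u}).ncard = n + m - 3 := by
      rw [Set.ncard_diff_singleton_of_mem hu, hcard]
      omega
    calc n + m - 3 = (S \ {u}).ncard := h1.symm
      _ ≤ (S ∩ T).ncard := Set.ncard_le_ncard hsub
  have hvT : v ∈ T := by rw [hTdef]; exact Set.mem_insert _ _
  by_cases hee : e = e'
  · by_cases haa : a = a'
    · exact hv (by rw [hScross, haa, hee, ← hTcross]; exact hvT)
    · have hsub2 : S ∩ T ⊆ ({a}ᶜ ×ˢ {e} : Set (Fin n × Fin m)) := by
        rintro z ⟨hz1, hz2⟩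
        rw [hScross] at hz1
        rw [hTcross] at hz2
        simp only [Set.mem_union, Set.mem_prod, Set.mem_singleton_iff, Set.mem_compl_iff] at hz1 hz2 ⊢
        rcases hz1 with ⟨e1, e2⟩ | ⟨e1, e2⟩
        · rcases hz2 with ⟨f1, f2⟩ | ⟨f1, f2⟩
          · exact absurd (e1.symm.trans f1) haa
          · exact absurd (f2.trans hee.symm) e2
        · exact ⟨e1, e2⟩
      have hup : (S ∩ T).ncard ≤ n - 1 := by
        have := Set.ncard_le_ncard hsub2 (Set.toFinite _)
        rwa [ncard_col, ncard_compl_singleton] at this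
      omega
  · by_cases haa : a = a'
    · have hsub2 : S ∩ T ⊆ ({a} ×ˢ ({e}ᶜ : Set (Fin m)) : Set (Fin n × Fin m)) := by
        rintro z ⟨hz1, hz2⟩
        rw [hScross] at hz1
        rw [hTcross] at hz2
        simp only [Set.mem_union, Set.mem_prod, Set.mem_singleton_iff, Set.mem_compl_iff] at hz1 hz2 ⊢
        rcases hz1 with ⟨e1, e2⟩ | ⟨e1, e2⟩
        · exact ⟨e1, e2⟩
        · rcases hz2 with ⟨f1, f2⟩ | ⟨f1, f2⟩
          · exact absurd (f1.trans haa.symm) e1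
          · exact absurd (e2.symm.trans f2) hee
      have hup : (S ∩ T).ncard ≤ m - 1 := by
        have := Set.ncard_le_ncard hsub2 (Set.toFinite _)
        rwa [ncard_row, ncard_compl_singleton] at this
      omega
    · have hsub2 : S ∩ T ⊆ ({(a, e'), (a', e)} : Set (Fin n × Fin m)) := by
        rintro z ⟨hz1, hz2⟩
        rw [hScross] at hz1
        rw [hTcross] at hz2
        simp only [Set.mem_union, Set.mem_prod, Set.mem_singleton_iff, Set.mem_compl_iff] at hz1 hz2
        simp only [Set.mem_insert_iff, Set.mem_singleton_iff]
        rcases hz1 with ⟨e1, e2⟩ | ⟨e1, e2⟩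
        · rcases hz2 with ⟨f1, f2⟩ | ⟨f1, f2⟩
          · exact absurd (e1.symm.trans f1) haa
          · exact Or.inl (Prod.ext e1 f2)
        · rcases hz2 with ⟨f1, f2⟩ | ⟨f1, f2⟩
          · exact Or.inr (Prod.ext f1 e2)
          · exact absurd (e2.symm.trans f2) hee
      have hup : (S ∩ T).ncard ≤ 2 := by
        calc (S ∩ T).ncard ≤ ({(a, e'), (a', e)} : Set (Fin n × Fin m)).ncard :=
              Set.ncard_le_ncard hsub2 (Set.toFinite _)
          _ ≤ 1 + 1 := (Set.ncard_insert_le _ _).trans (by simp)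
        

      omega




-- ======== explicit configurations ========

def Dst (a0 : Fin n) (e0 g : Fin m) (R1 R2 : Set (Fin n)) : Set (Fin n × Fin m) :=
  ({a0} ×ˢ ({e0, g}ᶜ : Set (Fin m))) ∪ (R1 ×ˢ {e0}) ∪ (R2 ×ˢ {g})

def Ast (a0 : Fin n) (g : Fin m) (R : Set (Fin n)) : Set (Fin n × Fin m) :=
  ({a0} ×ˢ ({g}ᶜ : Set (Fin m))) ∪ (R ×ˢ {g})

abbrev Bst (a0 : Fin n) (e0 g : Fin m) : Set (Fin n × Fin m) := Dst a0 e0 g {a0}ᶜ ∅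

lemma mem_Dst_iff {a0 : Fin n} {e0 g : Fin m} {R1 R2 : Set (Fin n)} {z : Fin n × Fin m} :
    z ∈ Dst a0 e0 g R1 R2 ↔
      (z.1 = a0 ∧ z.2 ≠ e0 ∧ z.2 ≠ g) ∨ (z.1 ∈ R1 ∧ z.2 = e0) ∨ (z.1 ∈ R2 ∧ z.2 = g) := by
  simp only [Dst, Set.mem_union, Set.mem_prod, Set.mem_singleton_iff, Set.mem_compl_iff,
    Set.mem_insert_iff, not_or]
  tauto

lemma mem_Ast_iff {a0 : Fin n} {g : Fin m} {R : Set (Fin n)} {z : Fin n × Fin m} :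
    z ∈ Ast a0 g R ↔ (z.1 = a0 ∧ z.2 ≠ g) ∨ (z.1 ∈ R ∧ z.2 = g) := by
  simp only [Ast, Set.mem_union, Set.mem_prod, Set.mem_singleton_iff, Set.mem_compl_iff]

lemma gp_Dst (a0 : Fin n) {e0 g : Fin m} {R1 R2 : Set (Fin n)} (hg : g ≠ e0)
    (h1 : a0 ∉ R1) (h2 : a0 ∉ R2) (hd : ∀ x, x ∈ R1 → x ∈ R2 → False) :
    IsGPSet (HG n m) (Dst a0 e0 g R1 R2) := by
  rw [isGPSet_iff_noL]
  exact noL_master a0 e0 g ({e0, g}ᶜ) R1 R2 (fun _ => by simp) (fun _ => by simp)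
    hd (fun h => absurd h h1) (fun h => absurd h h2)

lemma gp_Ast (a0 : Fin n) (g : Fin m) {R : Set (Fin n)} (hR : a0 ∉ R) :
    IsGPSet (HG n m) (Ast a0 g R) := by
  rw [isGPSet_iff_noL]
  have h := noL_master a0 g g ({g}ᶜ) R ∅ (fun _ => by simp)
    (fun h => absurd h (by simp)) (fun x _ hx => Set.notMem_empty x hx)
    (fun h => absurd h hR) (fun h => absurd h (Set.notMem_empty a0))
  have he : ({a0} ×ˢ ({g}ᶜ : Set (Fin m))) ∪ (R ×ˢ {g}) ∪ ((∅ : Set (Fin n)) ×ˢ {g})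
      = Ast a0 g R := by
    simp [Ast]
  exact he ▸ h

-- ======== the moves ========

lemma move_shuffle (a0 : Fin n) {e0 g g' : Fin m} (hg : g ≠ e0) (hg' : g' ≠ e0)
    (hgg' : g ≠ g') : LegalMove (HG n m) (Bst a0 e0 g) (Bst a0 e0 g') := by
  have hd0 : ∀ x : Fin n, x ∈ ({a0}ᶜ : Set (Fin n)) → x ∈ (∅ : Set (Fin n)) → False :=
    fun x _ h => h
  refine ⟨gp_Dst a0 hg (by simp) (Set.notMem_empty _) hd0, (a0, g'), ?_, (a0, g), ?_, ?_, ?_,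
    gp_Dst a0 hg' (by simp) (Set.notMem_empty _) hd0⟩
  · exact mem_Dst_iff.mpr (Or.inl ⟨rfl, hg', fun h => hgg' h.symm⟩)
  · intro h
    rcases mem_Dst_iff.mp h with ⟨_, _, h3⟩ | ⟨h1, _⟩ | ⟨h1, _⟩
    · exact h3 rfl
    · exact h1 rfl
    · exact h1
  · exact hg_adj.mpr (Or.inl ⟨rfl, fun h => hgg' h.symm⟩)
  · ext ⟨z1, z2⟩
    simp only [mem_Dst_iff, Set.mem_insert_iff, Set.mem_diff, Set.mem_singleton_iff,
      Prod.mk.injEq, Set.mem_compl_iff, Set.mem_empty_iff_false]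
    constructor
    · rintro (⟨h1, h2, h3⟩ | ⟨h1, h2⟩ | ⟨h1, h2⟩)
      · by_cases hz : z2 = g
        · exact Or.inl ⟨h1, hz⟩
        · exact Or.inr ⟨Or.inl ⟨h1, h2, hz⟩, fun hh => h3 hh.2⟩
      · exact Or.inr ⟨Or.inr (Or.inl ⟨h1, h2⟩), fun hh => hg' (hh.2.symm.trans h2)⟩
      · exact absurd h1 id
    · rintro (⟨h1, h2⟩ | ⟨(⟨h1, h2, h3⟩ | ⟨h1, h2⟩ | ⟨h1, h2⟩), h4⟩)
      · exact Or.inl ⟨h1, fun hh => hg (h2.symm.trans hh), fun hh => hgg' (h2.symm.trans hh)⟩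
      · refine Or.inl ⟨h1, h2, fun hh => h4 ⟨h1, hh⟩⟩
      · exact Or.inr (Or.inl ⟨h1, h2⟩)
      · exact absurd h1 id

lemma move_rover (a0 : Fin n) {e0 c : Fin m} {r : Fin n} (hc : c ≠ e0) (hr : r ≠ a0) :
    LegalMove (HG n m) (Bst a0 e0 c) (Dst a0 e0 c ({a0}ᶜ ∩ {r}ᶜ) {r}) := by
  have hd0 : ∀ x : Fin n, x ∈ ({a0}ᶜ : Set (Fin n)) → x ∈ (∅ : Set (Fin n)) → False :=
    fun x _ h => h
  refine ⟨gp_Dst a0 hc (by simp) (Set.notMem_empty _) hd0, (r, e0), ?_, (r, c), ?_, ?_, ?_,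
    gp_Dst a0 hc (fun h => h.1 rfl) (fun h => hr (Set.mem_singleton_iff.mp h).symm)
      (fun x hx1 hx2 => hx1.2 hx2)⟩
  · exact mem_Dst_iff.mpr (Or.inr (Or.inl ⟨hr, rfl⟩))
  · intro h
    rcases mem_Dst_iff.mp h with ⟨h1, _, _⟩ | ⟨_, h2⟩ | ⟨h1, _⟩
    · exact hr h1
    · exact hc h2
    · exact h1
  · exact hg_adj.mpr (Or.inl ⟨rfl, fun h => hc h.symm⟩)
  · ext ⟨z1, z2⟩
    simp only [mem_Dst_iff, Set.mem_insert_iff, Set.mem_diff, Set.mem_singleton_iff,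
      Prod.mk.injEq, Set.mem_compl_iff, Set.mem_empty_iff_false, Set.mem_inter_iff]
    constructor
    · rintro (⟨h1, h2, h3⟩ | ⟨⟨h1, h2⟩, h3⟩ | ⟨h1, h2⟩)
      · exact Or.inr ⟨Or.inl ⟨h1, h2, h3⟩, fun hh => hr (hh.1.symm.trans h1)⟩
      · exact Or.inr ⟨Or.inr (Or.inl ⟨h1, h3⟩), fun hh => h2 hh.1⟩
      · exact Or.inl ⟨h1, h2⟩
    · rintro (⟨h1, h2⟩ | ⟨(⟨h1, h2, h3⟩ | ⟨h1, h2⟩ | ⟨h1, h2⟩), h4⟩)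
      · exact Or.inr (Or.inr ⟨h1, h2⟩)
      · exact Or.inl ⟨h1, h2, h3⟩
      · exact Or.inr (Or.inl ⟨⟨h1, fun hh => h4 ⟨hh, h2⟩⟩, h2⟩)
      · exact absurd h1 id

lemma move_dance_step (a0 : Fin n) {e0 g : Fin m} {R1 R2 : Set (Fin n)} {r : Fin n}
    (hg : g ≠ e0) (h1 : a0 ∉ R1) (h2 : a0 ∉ R2) (hd : ∀ x, x ∈ R1 → x ∈ R2 → False)
    (hr : r ∈ R1) :
    LegalMove (HG n m) (Dst a0 e0 g R1 R2) (Dst a0 e0 g (R1 \ {r}) (insert r R2)) := by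
  have hra : r ≠ a0 := fun h => h1 (h ▸ hr)
  refine ⟨gp_Dst a0 hg h1 h2 hd, (r, e0), ?_, (r, g), ?_, ?_, ?_,
    gp_Dst a0 hg (fun h => h1 h.1)
      (fun h => by
        rcases Set.mem_insert_iff.mp h with h | h
        · exact hra h.symm
        · exact h2 h)
      (fun x hx1 hx2 => by
        rcases Set.mem_insert_iff.mp hx2 with h | h
        · exact hx1.2 h
        · exact hd x hx1.1 h)⟩
  · exact mem_Dst_iff.mpr (Or.inr (Or.inl ⟨hr, rfl⟩))
  · intro h
    rcases mem_Dst_iff.mp h with ⟨h1', _, _⟩ | ⟨_, h2'⟩ | ⟨h1', _⟩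
    · exact hra h1'
    · exact hg h2'
    · exact hd r hr h1'
  · exact hg_adj.mpr (Or.inl ⟨rfl, fun h => hg h.symm⟩)
  · ext ⟨z1, z2⟩
    simp only [mem_Dst_iff, Set.mem_insert_iff, Set.mem_diff, Set.mem_singleton_iff,
      Prod.mk.injEq]
    constructor
    · rintro (⟨h1', h2', h3⟩ | ⟨⟨h1', h2'⟩, h3⟩ | ⟨(h1' | h1'), h2'⟩)
      · exact Or.inr ⟨Or.inl ⟨h1', h2', h3⟩, fun hh => hra (hh.1 ▸ h1')⟩
      · exact Or.inr ⟨Or.inr (Or.inl ⟨h1', h3⟩), fun hh => h2' hh.1⟩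
      · exact Or.inl ⟨h1', h2'⟩
      · exact Or.inr ⟨Or.inr (Or.inr ⟨h1', h2'⟩), fun hh => hg (h2'.symm.trans hh.2)⟩
    · rintro (⟨h1', h2'⟩ | ⟨(⟨h1', h2', h3⟩ | ⟨h1', h2'⟩ | ⟨h1', h2'⟩), h4⟩)
      · exact Or.inr (Or.inr ⟨Or.inl h1', h2'⟩)
      · exact Or.inl ⟨h1', h2', h3⟩
      · exact Or.inr (Or.inl ⟨⟨h1', fun hh => h4 ⟨hh, h2'⟩⟩, h2'⟩)
      · exact Or.inr (Or.inr ⟨Or.inr h1', h2'⟩)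

lemma move_dance_last (a0 : Fin n) {e0 g : Fin m} {R2 : Set (Fin n)} {r : Fin n}
    (hg : g ≠ e0) (h2 : a0 ∉ R2) (hra : r ≠ a0) (hrR2 : r ∉ R2) :
    LegalMove (HG n m) (Dst a0 e0 g {r} R2) (Ast a0 g R2) := by
  refine ⟨gp_Dst a0 hg (fun h => hra (Set.mem_singleton_iff.mp h).symm) h2
      (fun x hx1 hx2 => hrR2 ((Set.mem_singleton_iff.mp hx1) ▸ hx2)),
    (r, e0), ?_, (a0, e0), ?_, ?_, ?_, gp_Ast a0 g h2⟩
  · exact mem_Dst_iff.mpr (Or.inr (Or.inl ⟨rfl, rfl⟩))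
  · intro h
    rcases mem_Dst_iff.mp h with ⟨_, h2', _⟩ | ⟨h1', _⟩ | ⟨h1', h2'⟩
    · exact h2' rfl
    · exact hra (Set.mem_singleton_iff.mp h1').symm
    · exact h2 h1'
  · exact hg_adj.mpr (Or.inr ⟨rfl, hra⟩)
  · ext ⟨z1, z2⟩
    simp only [mem_Dst_iff, mem_Ast_iff, Set.mem_insert_iff, Set.mem_diff,
      Set.mem_singleton_iff, Prod.mk.injEq]
    constructor
    · rintro (⟨h1', h2'⟩ | ⟨h1', h2'⟩)
      · by_cases hz : z2 = e0
        · exact Or.inl ⟨h1', hz⟩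
        · exact Or.inr ⟨Or.inl ⟨h1', hz, h2'⟩, fun hh => hz hh.2⟩
      · exact Or.inr ⟨Or.inr (Or.inr ⟨h1', h2'⟩), fun hh => hg (h2'.symm.trans hh.2)⟩
    · rintro (⟨h1', h2'⟩ | ⟨(⟨h1', h2', h3⟩ | ⟨h1', h2'⟩ | ⟨h1', h2'⟩), h4⟩)
      · exact Or.inl ⟨h1', fun hh => hg (hh.symm.trans h2')⟩
      · exact Or.inl ⟨h1', h3⟩
      · exact absurd ⟨h1', h2'⟩ h4
      · exact Or.inr ⟨h1', h2'⟩

-- ======== the dance ========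

lemma dance (a0 : Fin n) {e0 g : Fin m} (hg : g ≠ e0) :
    ∀ (k : ℕ) (R1 R2 : Finset (Fin n)), R1.card = k → R1.Nonempty →
      a0 ∉ R1 → a0 ∉ R2 → (∀ x ∈ R1, x ∉ R2) →
      ∃ T A, Trip (HG n m) (Dst a0 e0 g ↑R1 ↑R2) T A ∧ (a0, e0) ∈ A := by
  intro k
  induction k with
  | zero =>
    intro R1 R2 hcard hne _ _ _
    rw [Finset.card_eq_zero] at hcard
    rw [hcard] at hne
    exact absurd hne (by simp)
  | succ k ih =>
    intro R1 R2 hcard hne h1 h2 hd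
    obtain ⟨r, hr⟩ := hne
    have hra : r ≠ a0 := fun h => h1 (h ▸ hr)
    by_cases hk : k = 0
    · have h1card : R1.card = 1 := by omega
      obtain ⟨y, hy⟩ := Finset.card_eq_one.mp h1card
      have hry : r = y := by rw [hy] at hr; simpa using hr
      have hR1 : R1 = {r} := by rw [hy, hry]
      have hmv : LegalMove (HG n m) (Dst a0 e0 g (↑R1) (↑R2)) (Ast a0 g ↑R2) := by
        rw [hR1, Finset.coe_singleton]
        exact move_dance_last a0 hg (by simpa using h2) hra (by simpa using hd r hr)
      refine ⟨Ast a0 g ↑R2, _, Trip.single hmv, Or.inr ?_⟩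
      exact mem_Ast_iff.mpr (Or.inl ⟨rfl, fun h => hg h.symm⟩)
    · have hmv : LegalMove (HG n m) (Dst a0 e0 g (↑R1) (↑R2))
          (Dst a0 e0 g (↑(R1.erase r)) (↑(insert r R2))) := by
        rw [Finset.coe_erase, Finset.coe_insert]
        exact move_dance_step a0 hg (by simpa using h1) (by simpa using h2)
          (fun x hx1 hx2 => hd x hx1 hx2) (by simpa using hr)
      obtain ⟨T, A, htrip, hmem⟩ := ih (R1.erase r) (insert r R2)
        (by rw [Finset.card_erase_of_mem hr, hcard]; omega)
        (by rw [← Finset.card_pos, Finset.card_erase_of_mem hr, hcard]; omega)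
        (fun h => h1 (Finset.mem_of_mem_erase h))
        (by
          intro h
          rcases Finset.mem_insert.mp h with h | h
          · exact hra h.symm
          · exact h2 h)
        (by
          intro x hx
          intro h
          rcases Finset.mem_insert.mp h with h | h
          · exact Finset.ne_of_mem_erase hx h
          · exact hd x (Finset.mem_of_mem_erase hx) h)
      exact ⟨T, _, (Trip.single hmv).trans htrip, Or.inr hmem⟩

-- ======== the three mobile configurations ========

lemma mobile_m1 : ∃ S : Set (Fin n × Fin 1), IsMobileGPSet (HG n 1) S ∧ S.ncard = n := by
  refine ⟨Set.univ, ⟨?_, 0, fun _ => Set.univ, rfl, fun i h => absurd h (by omega), by simp⟩, ?_⟩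
  · rw [isGPSet_iff_noL]
    intro p _ q _ r _ _ _
    exact Or.inr (Subsingleton.elim _ _)
  · rw [Set.ncard_univ]
    simp

lemma mobile_m2 (hn : 2 ≤ n) :
    ∃ S : Set (Fin n × Fin 2), IsMobileGPSet (HG n 2) S ∧ S.ncard = n := by
  have a1 : Fin n := ⟨0, by omega⟩
  set S0 : Set (Fin n × Fin 2) := Set.univ ×ˢ {(0 : Fin 2)} with hS0
  have hgp : IsGPSet (HG n 2) S0 := by
    rw [isGPSet_iff_noL]
    have h := noL_master a1 (0 : Fin 2) (1 : Fin 2) ∅ Set.univ ∅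
      (fun _ => Set.notMem_empty _) (fun _ => Set.notMem_empty _)
      (fun x _ h => h) (fun _ => rfl) (fun h => absurd h (Set.notMem_empty _))
    have he : ({a1} ×ˢ (∅ : Set (Fin 2))) ∪ ((Set.univ : Set (Fin n)) ×ˢ {(0 : Fin 2)})
        ∪ ((∅ : Set (Fin n)) ×ˢ {(1 : Fin 2)}) = S0 := by
      simp [hS0]
    exact he ▸ h
  have hmove : ∀ r : Fin n, LegalMove (HG n 2) S0
      (({r}ᶜ ×ˢ {(0 : Fin 2)}) ∪ ({r} ×ˢ {(1 : Fin 2)})) := by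
    intro r
    refine ⟨hgp, (r, 0), by rw [hS0]; exact ⟨Set.mem_univ _, rfl⟩, (r, 1), ?_, ?_, ?_, ?_⟩
    · intro h
      rw [hS0, Set.mem_prod, Set.mem_singleton_iff] at h
      exact absurd h.2 (show ((1 : Fin 2)) ≠ 0 by decide)
    · exact hg_adj.mpr (Or.inl ⟨rfl, show (0 : Fin 2) ≠ 1 from by decide⟩)
    · rw [hS0]
      ext ⟨z1, z2⟩
      simp only [Set.mem_insert_iff, Set.mem_diff, Set.mem_singleton_iff, Set.mem_union,
        Set.mem_prod, Set.mem_compl_iff, Set.mem_univ, true_and, Prod.mk.injEq]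
      constructor
      · rintro (⟨h1, h2⟩ | ⟨h1, h2⟩)
        · exact Or.inr ⟨h2, fun hh => h1 hh.1⟩
        · exact Or.inl ⟨h1, h2⟩
      · rintro (⟨h1, h2⟩ | ⟨h2, h4⟩)
        · exact Or.inr ⟨h1, h2⟩
        · exact Or.inl ⟨fun hh => h4 ⟨hh, h2⟩, h2⟩
    · rw [isGPSet_iff_noL]
      have h := noL_master r (0 : Fin 2) (1 : Fin 2) ∅ ({r}ᶜ : Set (Fin n)) {r}
        (fun _ => Set.notMem_empty _) (fun _ => Set.notMem_empty _)
        (fun x hx1 hx2 => hx1 hx2) (fun h => absurd rfl h) (fun _ => rfl)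
      have he : ({r} ×ˢ (∅ : Set (Fin 2))) ∪ (({r}ᶜ : Set (Fin n)) ×ˢ {(0 : Fin 2)})
          ∪ (({r} : Set (Fin n)) ×ˢ {(1 : Fin 2)})
          = ({r}ᶜ ×ˢ {(0 : Fin 2)}) ∪ ({r} ×ˢ {(1 : Fin 2)}) := by
        simp
      exact he ▸ h
  refine ⟨S0, ?_, ?_⟩
  · apply isMobile_of_trips hgp
    rintro ⟨r, c⟩
    by_cases hc : c = 0
    · exact ⟨S0, S0, Trip.refl _ _, by rw [hS0]; exact ⟨Set.mem_univ _, hc⟩⟩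
    · have hc1 : c = 1 := by
        have := c.isLt
        have h0 : c.val ≠ 0 := fun h => hc (Fin.ext h)
        exact Fin.ext (by omega)
      refine ⟨_, _, Trip.single (hmove r), Or.inr (Or.inr ⟨rfl, hc1⟩)⟩
  · rw [hS0, ncard_col, Set.ncard_univ]
    simp

lemma mobile_m3' (hm3 : 3 ≤ m) (hn3 : 3 ≤ n) (a0 : Fin n) (e0 g1 : Fin m)
    (hg1 : g1 ≠ e0) :
    IsMobileGPSet (HG n m) (Bst a0 e0 g1) ∧ (Bst a0 e0 g1).ncard = n + m - 3 := by
  have hd0 : ∀ x : Fin n, x ∈ ({a0}ᶜ : Set (Fin n)) → x ∈ (∅ : Set (Fin n)) → False :=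
    fun x _ h => h
  have hgp : IsGPSet (HG n m) (Bst a0 e0 g1) :=
    gp_Dst a0 hg1 (by simp) (Set.notMem_empty _) hd0
  constructor
  · apply isMobile_of_trips hgp
    rintro ⟨r, c⟩
    by_cases hc : c = e0
    · by_cases hra : r = a0
      · have hStart : Dst a0 e0 g1 (↑(Finset.univ.erase a0)) ((∅ : Finset (Fin n)) : Set (Fin n))
            = Bst a0 e0 g1 := by
          have h1 : (↑(Finset.univ.erase a0) : Set (Fin n)) = {a0}ᶜ := by
            rw [Finset.coe_erase, Finset.coe_univ, Set.compl_eq_univ_diff]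
          rw [h1, Finset.coe_empty]
        obtain ⟨x, hx, -⟩ := fin_exists_ne_ne (m := n) hn3 a0 a0
        obtain ⟨T, A, htrip, hmem⟩ := dance a0 hg1 (Finset.univ.erase a0).card
          (Finset.univ.erase a0) ∅ rfl ⟨x, by simp [hx]⟩ (by simp) (by simp) (by simp)
        rw [hStart] at htrip
        exact ⟨T, A, htrip, by rw [hra, hc]; exact hmem⟩
      · exact ⟨_, _, Trip.refl _ _,
          mem_Dst_iff.mpr (Or.inr (Or.inl ⟨hra, hc⟩))⟩
    · by_cases hra : r = a0
      · by_cases hcg : c = g1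
        · obtain ⟨g', hg'1, hg'2⟩ := fin_exists_ne_ne hm3 e0 g1
          refine ⟨_, _, Trip.single (move_shuffle a0 hg1 hg'1 (fun h => hg'2 h.symm)), Or.inr ?_⟩
          exact mem_Dst_iff.mpr (Or.inl ⟨hra, hc, fun h => hg'2 ((hcg.symm.trans h).symm)⟩)
        · exact ⟨_, _, Trip.refl _ _, mem_Dst_iff.mpr (Or.inl ⟨hra, hc, hcg⟩)⟩
      · by_cases hcg : c = g1
        · refine ⟨_, _, Trip.single (move_rover a0 hg1 hra), Or.inr ?_⟩
          exact mem_Dst_iff.mpr (Or.inr (Or.inr ⟨rfl, hcg⟩))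
        · refine ⟨_, _, (Trip.single (move_shuffle a0 hg1 hc (fun h => hcg h.symm))).trans
            (Trip.single (move_rover a0 hc hra)), Or.inr (Or.inr ?_)⟩
          exact mem_Dst_iff.mpr (Or.inr (Or.inr ⟨rfl, rfl⟩))
  · have hBst : Bst a0 e0 g1 = ({a0} ×ˢ ({e0, g1}ᶜ : Set (Fin m)))
        ∪ (({a0}ᶜ : Set (Fin n)) ×ˢ {e0}) := by
      simp [Bst, Dst]
    have hdisj : Disjoint ({a0} ×ˢ ({e0, g1}ᶜ : Set (Fin m)))
        (({a0}ᶜ : Set (Fin n)) ×ˢ {e0}) := by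
      rw [Set.disjoint_left]
      rintro z ⟨-, h2⟩ ⟨-, h4⟩
      exact h2 (Or.inl h4)
    rw [hBst, Set.ncard_union_eq hdisj, ncard_row, ncard_col,
      ncard_compl_pair (fun h => hg1 h.symm), ncard_compl_singleton]
    omega

lemma mobile_m3 (hm3 : 3 ≤ m) (hn3 : 3 ≤ n) :
    ∃ S : Set (Fin n × Fin m), IsMobileGPSet (HG n m) S ∧ S.ncard = n + m - 3 := by
  have h := mobile_m3' hm3 hn3 ⟨0, by omega⟩ ⟨0, by omega⟩ ⟨1, by omega⟩
    (by intro h; rw [Fin.mk.injEq] at h; omega)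
  exact ⟨_, h.1, h.2⟩

end hamming

theorem mob_hamming (n m : ℕ) (hm : 1 ≤ m) (hnm : m ≤ n) :
    mob ((⊤ : SimpleGraph (Fin n)) □ (⊤ : SimpleGraph (Fin m))) =
      if m ≤ 2 then n else n + m - 3 := by
  by_cases hm2 : m ≤ 2
  · rw [if_pos hm2]
    unfold mob
    interval_cases m
    · -- m = 1
      obtain ⟨S, hS, hcard⟩ := mobile_m1 (n := n)
      apply IsGreatest.csSup_eq
      constructor
      · exact ⟨S, hS, hcard⟩
      · rintro N ⟨S', _, rfl⟩
        calc S'.ncard ≤ (Set.univ : Set (Fin n × Fin 1)).ncard :=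
              Set.ncard_le_ncard (Set.subset_univ _)
          _ = n := by rw [Set.ncard_univ]; simp
    · -- m = 2
      obtain ⟨S, hS, hcard⟩ := mobile_m2 hnm
      apply IsGreatest.csSup_eq
      constructor
      · exact ⟨S, hS, hcard⟩
      · rintro N ⟨S', hS', rfl⟩
        exact noL_card_le_m2 hnm ((isGPSet_iff_noL _).mp hS'.1)
  · push_neg at hm2
    have hm3 : 3 ≤ m := hm2
    have hn3 : 3 ≤ n := le_trans hm3 hnm
    rw [if_neg (by omega)]
    unfold mob
    obtain ⟨S, hS, hcard⟩ := mobile_m3 hm3 hn3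
    apply IsGreatest.csSup_eq
    constructor
    · exact ⟨S, hS, hcard⟩
    · rintro N ⟨S', hS', rfl⟩
      obtain ⟨hle, -⟩ := noL_structure hm3 hnm ((isGPSet_iff_noL _).mp hS'.1)
      by_cases heq : S'.ncard = n + m - 2
      · exfalso
        obtain ⟨hgp, k, f, hf0, hmoves, huniv⟩ := hS'
        by_cases hk : k = 0
        · subst hk
          have hU : (⋃ i ∈ Set.Iic 0, f i) = f 0 := by
            ext x
            simp only [Set.mem_iUnion, Set.mem_Iic, Nat.le_zero]
            constructor
            · rintro ⟨i, rfl, hx⟩; exact hx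
            · intro hx; exact ⟨0, rfl, hx⟩
          rw [hU, hf0] at huniv
          have hnm' : S'.ncard = n * m := by
            rw [huniv, Set.ncard_univ]
            simp
          have h3 : n * 3 ≤ n * m := Nat.mul_le_mul_left n hm3
          rw [← hnm', heq] at h3
          omega
        · have hmv := hmoves 0 (by omega)
          rw [hf0] at hmv
          exact cross_stuck hm3 hnm hmv heq
      · omega
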